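/- (Tender measurement lemma, version with classical record.) Let {ρ_a : a ∈ A} be a finite family of density operators on a finite-dimensional complex Hilbert space H, let {D_b : b ∈ B} be a POVM on H indexed by a finite set B, let φ : A → B be any map, and let ε > 0 be such that 1 − Tr(ρ_a D_{φ(a)}) ≤ ε for every a ∈ A. Then the quantum operation Δ : density operators on H → density operators on ℂ^B ⊗ H defined by Δ(ρ) = Σ_{b∈B} |b⟩⟨b| ⊗ √(D_b) ρ √(D_b) satisfies ‖ |φ(a)⟩⟨φ(a)| ⊗ ρ_a − Δ(ρ_a) ‖₁ ≤ √(8ε) + ε for every a ∈ A. -/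

import Mathlib

open scoped ComplexOrder Kronecker
noncomputable section

/-- The old Mathlib `Matrix.PosSemidef.sqrt` (removed since), with its original definition. -/
def Matrix.PosSemidef.sqrt {n 𝕜 : Type*} [Fintype n] [RCLike 𝕜] [DecidableEq n]
    {A : Matrix n n 𝕜} (hA : A.PosSemidef) : Matrix n n 𝕜 :=
  hA.1.eigenvectorUnitary.1 * Matrix.diagonal ((↑) ∘ (√·) ∘ hA.1.eigenvalues) *
  (star hA.1.eigenvectorUnitary : Matrix n n 𝕜)

def traceNorm {n : Type*} [Fintype n] [DecidableEq n] (A : Matrix n n ℂ) : ℝ :=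
  ((Matrix.posSemidef_conjTranspose_mul_self A).sqrt).trace.re

def IsDensity {n : Type*} [Fintype n] (ρ : Matrix n n ℂ) : Prop :=
  ρ.PosSemidef ∧ ρ.trace = 1

/-!
Put `Λ = √D_{φ(a)}`. The difference splits as `|φ(a)⟩⟨φ(a)| ⊗ (ρ - ΛρΛ)` minus the positive
remainder `∑_{b ≠ φ(a)} |b⟩⟨b| ⊗ √D_b ρ √D_b`, whose trace is `1 - Tr(ρ D_{φ(a)}) ≤ ε`.
For the first part (gentle measurement), pair `ρ - ΛρΛ = (1 - Λ)ρ + Λρ(1 - Λ)` with a unitary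
sign matrix `X` of the Hermitian difference, so that its trace norm is `Re Tr(X(ρ - ΛρΛ))`.
Cauchy–Schwarz for the inner product `(G, F) ↦ Tr(G†Fρ)` bounds each of the two terms by
`√Tr((1 - Λ)²ρ) ≤ √(1 - Tr(ρ D_{φ(a)}))`, because `(1 - Λ)² ≤ 1 - Λ²` when `0 ≤ Λ ≤ 1`.
-/

open scoped MatrixOrder

lemma CFC.le_sqrt_of_le_one {A : Type*} [Ring A] [StarRing A] [TopologicalSpace A]
    [Algebra ℝ A] [ContinuousFunctionalCalculus ℝ A IsSelfAdjoint] [PartialOrder A]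
    [StarOrderedRing A] [NonnegSpectrumClass ℝ A] [IsTopologicalRing A] [T2Space A]
    {a : A} (ha₀ : 0 ≤ a) (ha₁ : a ≤ 1) : a ≤ CFC.sqrt a := by
  rw [CFC.sqrt_eq_real_sqrt a, cfcₙ_eq_cfc]
  nth_rw 1 [← cfc_id ℝ a]
  exact cfc_mono fun x hx => Real.le_sqrt_self_iff.mpr ((CFC.le_one_iff a).mp ha₁ x hx)

namespace Matrix

lemma re_trace_conjTranspose_mul_le {m n 𝕜 : Type*} [Fintype m] [Fintype n] [RCLike 𝕜]
    (C D : Matrix m n 𝕜) :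
    RCLike.re (Cᴴ * D).trace ≤
      √(RCLike.re (Cᴴ * C).trace) * √(RCLike.re (Dᴴ * D).trace) := by
  have h : ∀ E F : Matrix m n 𝕜, (Eᴴ * F).trace =
      inner 𝕜 (WithLp.toLp 2 E.vec : EuclideanSpace 𝕜 (n × m)) (WithLp.toLp 2 F.vec) := by
    intro E F
    rw [EuclideanSpace.inner_eq_star_dotProduct, dotProduct_comm, ← star_vec_dotProduct_vec]
  simp only [h, ← norm_eq_sqrt_re_inner]
  exact re_inner_le_norm _ _

variable {n 𝕜 : Type*} [Fintype n] [DecidableEq n] [RCLike 𝕜]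

lemma re_trace_conjTranspose_mul_mul_le {ρ : Matrix n n 𝕜} (hρ : 0 ≤ ρ) (G F : Matrix n n 𝕜) :
    RCLike.re (Gᴴ * F * ρ).trace ≤
      √(RCLike.re (Gᴴ * G * ρ).trace) * √(RCLike.re (Fᴴ * F * ρ).trace) := by
  obtain ⟨B, rfl⟩ := CStarAlgebra.nonneg_iff_eq_star_mul_self.mp hρ
  have h : ∀ K L : Matrix n n 𝕜,
      (Kᴴ * L * (star B * B)).trace = ((K * Bᴴ)ᴴ * (L * Bᴴ)).trace := by
    intro K L
    rw [conjTranspose_mul, conjTranspose_conjTranspose, star_eq_conjTranspose, ← mul_assoc,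
      trace_mul_comm]
    simp only [mul_assoc]
  simp only [h]
  exact re_trace_conjTranspose_mul_le _ _

lemma re_trace_mul_le_of_le {ρ Q Q' : Matrix n n 𝕜} (hρ : 0 ≤ ρ) (hQ : Q ≤ Q') :
    RCLike.re (Q * ρ).trace ≤ RCLike.re (Q' * ρ).trace := by
  obtain ⟨B, rfl⟩ := CStarAlgebra.nonneg_iff_eq_star_mul_self.mp hρ
  have h := ((le_iff.mp hQ).mul_mul_conjTranspose_same B).trace_nonneg
  rw [trace_mul_cycle, ← star_eq_conjTranspose, trace_mul_comm, sub_mul, trace_sub] at h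
  simpa using (RCLike.nonneg_iff.mp h).1

lemma conjTranspose_mul_mul_self_of_mem_unitary {X : Matrix n n 𝕜}
    (hX : X ∈ unitary (Matrix n n 𝕜)) (F : Matrix n n 𝕜) : (X * F)ᴴ * (X * F) = Fᴴ * F := by
  rw [conjTranspose_mul, mul_assoc, ← mul_assoc Xᴴ, ← star_eq_conjTranspose X,
    Unitary.star_mul_self_of_mem hX, one_mul]

lemma re_trace_mul_le_of_mem_unitary {X P : Matrix n n 𝕜} (hX : X ∈ unitary (Matrix n n 𝕜))
    (hP : 0 ≤ P) : RCLike.re (X * P).trace ≤ RCLike.re P.trace := by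
  have h := re_trace_conjTranspose_mul_mul_le hP 1 X
  rw [← star_eq_conjTranspose X, Unitary.star_mul_self_of_mem hX] at h
  simp only [conjTranspose_one, one_mul] at h
  rwa [Real.mul_self_sqrt (RCLike.nonneg_iff.mp (nonneg_iff_posSemidef.mp hP).trace_nonneg).1]
    at h

omit [DecidableEq n] in
lemma single_kronecker_nonneg {m : Type*} [Fintype m] [DecidableEq m] (i : m)
    {M : Matrix n n 𝕜} (hM : 0 ≤ M) : 0 ≤ single i i (1 : 𝕜) ⊗ₖ M := by
  have hE : (single i i (1 : 𝕜)).PosSemidef := by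
    simpa using posSemidef_conjTranspose_mul_self (single i i (1 : 𝕜))
  exact nonneg_iff_posSemidef.mpr (hE.kronecker (nonneg_iff_posSemidef.mp hM))

omit [Fintype n] [DecidableEq n] in
lemma IsHermitian.single_kronecker {m : Type*} [DecidableEq m] (i : m) {M : Matrix n n 𝕜}
    (hM : M.IsHermitian) : (single i i (1 : 𝕜) ⊗ₖ M).IsHermitian := by
  simp [IsHermitian, conjTranspose_kronecker, hM.eq]

lemma trace_single_kronecker_sqrt_mul_mul_sqrt {m : Type*} [Fintype m] [DecidableEq m] (i : m)
    {P : Matrix n n 𝕜} (hP : 0 ≤ P) (ρ : Matrix n n 𝕜) :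
    (single i i (1 : 𝕜) ⊗ₖ (CFC.sqrt P * ρ * CFC.sqrt P)).trace = (ρ * P).trace := by
  rw [trace_kronecker, trace_single_eq_same, one_mul, trace_mul_cycle,
    CFC.sqrt_mul_sqrt_self P hP, trace_mul_comm]

end Matrix

section TraceNorm

open Matrix

variable {n : Type*} [Fintype n] [DecidableEq n]

lemma Matrix.PosSemidef.sqrt_eq_cfcSqrt {A : Matrix n n ℂ} (hA : A.PosSemidef) :
    hA.sqrt = CFC.sqrt A := by
  rw [CFC.sqrt_eq_real_sqrt A hA.nonneg, cfcₙ_eq_cfc, hA.1.cfc_eq]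
  rfl

lemma traceNorm_eq_re_trace_abs (A : Matrix n n ℂ) : traceNorm A = (CFC.abs A).trace.re := by
  rw [traceNorm, PosSemidef.sqrt_eq_cfcSqrt]
  rfl

lemma traceNorm_neg (A : Matrix n n ℂ) : traceNorm (-A) = traceNorm A := by
  simp only [traceNorm_eq_re_trace_abs, CFC.abs_neg]

lemma traceNorm_of_nonneg {A : Matrix n n ℂ} (hA : 0 ≤ A) : traceNorm A = A.trace.re := by
  rw [traceNorm_eq_re_trace_abs, CFC.abs_of_nonneg A hA]

lemma traceNorm_single_kronecker {m : Type*} [Fintype m] [DecidableEq m] (i : m)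
    (A : Matrix n n ℂ) : traceNorm (single i i (1 : ℂ) ⊗ₖ A) = traceNorm A := by
  set E := single i i (1 : ℂ)
  have hEE : E * E = E := by rw [single_mul_single_same, one_mul]
  have hE : Eᴴ = E := by simp [E]
  have habs : CFC.abs (E ⊗ₖ A) = E ⊗ₖ CFC.abs A := by
    refine CFC.sqrt_unique ?_ (single_kronecker_nonneg i (CFC.abs_nonneg A))
    rw [← mul_kronecker_mul, hEE, CFC.abs_mul_abs, star_eq_conjTranspose, star_eq_conjTranspose,
      conjTranspose_kronecker, hE, ← mul_kronecker_mul, hEE]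
  rw [traceNorm_eq_re_trace_abs, traceNorm_eq_re_trace_abs, habs, trace_kronecker,
    trace_single_eq_same, one_mul]

lemma Matrix.IsHermitian.re_trace_mul_le_traceNorm {A X : Matrix n n ℂ} (hA : A.IsHermitian)
    (hX : X ∈ unitary (Matrix n n ℂ)) : (X * A).trace.re ≤ traceNorm A := by
  have hX' : -X ∈ unitary (Matrix n n ℂ) := by
    simpa only [Unitary.coe_neg] using (-⟨X, hX⟩ : unitary (Matrix n n ℂ)).prop
  calc (X * A).trace.re = (X * A⁺).trace.re + (-X * A⁻).trace.re := by
        conv_lhs => rw [← CFC.posPart_sub_negPart A hA.isSelfAdjoint]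
        rw [mul_sub, trace_sub, Complex.sub_re, neg_mul, trace_neg, Complex.neg_re,
          sub_eq_add_neg]
    _ ≤ A⁺.trace.re + A⁻.trace.re :=
        add_le_add (re_trace_mul_le_of_mem_unitary hX (CFC.posPart_nonneg A))
          (re_trace_mul_le_of_mem_unitary hX' (CFC.negPart_nonneg A))
    _ = traceNorm A := by
        rw [traceNorm_eq_re_trace_abs, ← CFC.posPart_add_negPart A hA.isSelfAdjoint, trace_add,
          Complex.add_re]

lemma Matrix.IsHermitian.exists_mem_unitary_re_trace_mul_eq_traceNorm {A : Matrix n n ℂ}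
    (hA : A.IsHermitian) : ∃ X ∈ unitary (Matrix n n ℂ), (X * A).trace.re = traceNorm A := by
  let sign : ℝ → ℝ := fun x => if 0 ≤ x then 1 else -1
  have hsign : ContinuousOn sign (spectrum ℝ A) := finite_real_spectrum.continuousOn sign
  refine ⟨cfc sign A, ?_, ?_⟩
  · refine (cfc_unitary_iff sign A hA.isSelfAdjoint hsign).mpr fun x _ => ?_
    by_cases hx : 0 ≤ x <;> simp [sign, hx]
  · have : cfc sign A * A = CFC.abs A := by
      conv_lhs => enter [2]; rw [← cfc_id ℝ A]
      rw [← cfc_mul sign id A hsign, CFC.abs_eq_cfc_norm A hA.isSelfAdjoint]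
      refine cfc_congr fun x _ => ?_
      by_cases hx : 0 ≤ x
      · simp [sign, hx, abs_of_nonneg hx]
      · simp [sign, hx, abs_of_neg (not_le.mp hx)]
    rw [this, traceNorm_eq_re_trace_abs]

lemma Matrix.IsHermitian.traceNorm_add_le {A B : Matrix n n ℂ} (hA : A.IsHermitian)
    (hB : B.IsHermitian) : traceNorm (A + B) ≤ traceNorm A + traceNorm B := by
  obtain ⟨X, hX, hXAB⟩ := (hA.add hB).exists_mem_unitary_re_trace_mul_eq_traceNorm
  rw [← hXAB, mul_add, trace_add, Complex.add_re]
  exact add_le_add (hA.re_trace_mul_le_traceNorm hX) (hB.re_trace_mul_le_traceNorm hX)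

end TraceNorm

section Measurement

open Matrix Finset

variable {n : Type*} [Fintype n] [DecidableEq n]

lemma IsDensity.re_trace_one_sub_sqrt_sq_mul_le {ρ P : Matrix n n ℂ} (hρ : IsDensity ρ)
    (hP₀ : 0 ≤ P) (hP₁ : P ≤ 1) :
    ((1 - CFC.sqrt P)ᴴ * (1 - CFC.sqrt P) * ρ).trace.re ≤ 1 - (ρ * P).trace.re := by
  have hP₀₁ := CFC.le_sqrt_of_le_one hP₀ hP₁
  set Λ := CFC.sqrt P
  have hΛ : Λᴴ = Λ := (CFC.sqrt_nonneg P).isSelfAdjoint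
  have hΛΛ : Λ * Λ = P := CFC.sqrt_mul_sqrt_self P hP₀
  have hle : (1 - Λ)ᴴ * (1 - Λ) ≤ 1 - P := by
    have h : 1 - P - (1 - Λ)ᴴ * (1 - Λ) = (2 : ℝ) • (Λ - P) := by
      rw [conjTranspose_sub, conjTranspose_one, hΛ, ← hΛΛ, two_smul]
      noncomm_ring
    rw [← sub_nonneg, h]
    exact smul_nonneg zero_le_two (sub_nonneg.mpr hP₀₁)
  have h := re_trace_mul_le_of_le (nonneg_iff_posSemidef.mpr hρ.1) hle
  simp only [RCLike.re_to_complex] at h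
  rwa [sub_mul, one_mul, trace_sub, Complex.sub_re, hρ.2, Complex.one_re, trace_mul_comm P] at h

lemma IsDensity.traceNorm_sub_sqrt_mul_mul_sqrt_le {ρ P : Matrix n n ℂ} (hρ : IsDensity ρ)
    (hP₀ : 0 ≤ P) (hP₁ : P ≤ 1) :
    traceNorm (ρ - CFC.sqrt P * ρ * CFC.sqrt P) ≤ 2 * √(1 - (ρ * P).trace.re) := by
  set Λ := CFC.sqrt P
  have hρ₀ : 0 ≤ ρ := nonneg_iff_posSemidef.mpr hρ.1
  have hΛ : Λᴴ = Λ := (CFC.sqrt_nonneg P).isSelfAdjoint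
  have hΛΛ : Λ * Λ = P := CFC.sqrt_mul_sqrt_self P hP₀
  have hΛρΛ : (Λᴴ * Λ * ρ).trace.re ≤ 1 := by
    have h := re_trace_mul_le_of_le hρ₀ hP₁
    simp only [RCLike.re_to_complex] at h
    rw [hΛ, hΛΛ]
    rwa [one_mul, hρ.2, Complex.one_re] at h
  have hM : (ρ - Λ * ρ * Λ).IsHermitian := by
    have h := (hρ.1.conjTranspose_mul_mul_same Λ).1
    rw [hΛ] at h
    exact hρ.1.1.sub h
  obtain ⟨X, hX, hXM⟩ := hM.exists_mem_unitary_re_trace_mul_eq_traceNorm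
  have hsplit : (X * (ρ - Λ * ρ * Λ)).trace
      = (X * (1 - Λ) * ρ).trace + ((1 - Λ)ᴴ * (X * Λ) * ρ).trace := by
    have h : ((1 - Λ)ᴴ * (X * Λ) * ρ).trace = (X * Λ * ρ * (1 - Λ)).trace := by
      rw [conjTranspose_sub, conjTranspose_one, hΛ, mul_assoc, trace_mul_comm]
    rw [h, ← trace_add]
    congr 1
    noncomm_ring
  have h₁ := re_trace_conjTranspose_mul_mul_le hρ₀ 1 (X * (1 - Λ))
  have h₂ := re_trace_conjTranspose_mul_mul_le hρ₀ (1 - Λ) (X * Λ)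
  simp only [conjTranspose_mul_mul_self_of_mem_unitary hX, conjTranspose_one, mul_one, one_mul,
    hρ.2, RCLike.re_to_complex, Complex.one_re, Real.sqrt_one] at h₁ h₂
  have hδ := Real.sqrt_le_sqrt (hρ.re_trace_one_sub_sqrt_sq_mul_le hP₀ hP₁)
  replace hΛρΛ := Real.sqrt_le_one.mpr hΛρΛ
  rw [← hXM, hsplit, Complex.add_re]
  nlinarith [Real.sqrt_nonneg ((1 - Λ)ᴴ * (1 - Λ) * ρ).trace.re]

variable {B : Type*} [Fintype B] [DecidableEq B]

def measureWithRecord (D : B → Matrix n n ℂ) (ρ : Matrix n n ℂ) : Matrix (B × n) (B × n) ℂ :=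
  ∑ b, single b b (1 : ℂ) ⊗ₖ (CFC.sqrt (D b) * ρ * CFC.sqrt (D b))

lemma IsDensity.traceNorm_single_kronecker_sub_measureWithRecord_le {ρ : Matrix n n ℂ}
    (hρ : IsDensity ρ) {D : B → Matrix n n ℂ} (hD₀ : ∀ b, 0 ≤ D b) (hD₁ : ∑ b, D b = 1)
    (b₀ : B) :
    traceNorm (single b₀ b₀ (1 : ℂ) ⊗ₖ ρ - measureWithRecord D ρ)
      ≤ 2 * √(1 - (ρ * D b₀).trace.re) + (1 - (ρ * D b₀).trace.re) := by
  have hbranch : ∀ b, 0 ≤ CFC.sqrt (D b) * ρ * CFC.sqrt (D b) := fun b => by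
    simpa [(CFC.sqrt_nonneg (D b)).star_eq] using
      star_left_conjugate_nonneg (nonneg_iff_posSemidef.mpr hρ.1) (CFC.sqrt (D b))
  set R := ∑ b ∈ univ.erase b₀, single b b (1 : ℂ) ⊗ₖ (CFC.sqrt (D b) * ρ * CFC.sqrt (D b))
  have hR₀ : 0 ≤ R := sum_nonneg fun b _ => single_kronecker_nonneg b (hbranch b)
  have hrest : ∑ b ∈ univ.erase b₀, D b = 1 - D b₀ := by
    rw [sum_erase_eq_sub (mem_univ b₀), hD₁]
  have hRtr : R.trace.re = 1 - (ρ * D b₀).trace.re := by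
    rw [trace_sum, sum_congr rfl fun b _ => trace_single_kronecker_sqrt_mul_mul_sqrt b (hD₀ b) ρ,
      ← trace_sum, ← mul_sum, hrest, mul_sub, mul_one, trace_sub, Complex.sub_re, hρ.2,
      Complex.one_re]
  have hsplit : single b₀ b₀ (1 : ℂ) ⊗ₖ ρ - measureWithRecord D ρ
      = single b₀ b₀ (1 : ℂ) ⊗ₖ (ρ - CFC.sqrt (D b₀) * ρ * CFC.sqrt (D b₀)) + -R := by
    rw [measureWithRecord, ← add_sum_erase _ _ (mem_univ b₀), ← sub_sub, ← sub_eq_add_neg]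
    congr 1
    ext
    simp [mul_sub]
  have hM : (ρ - CFC.sqrt (D b₀) * ρ * CFC.sqrt (D b₀)).IsHermitian :=
    hρ.1.1.sub (hbranch b₀).isSelfAdjoint
  have hD₀₁ : D b₀ ≤ 1 := by
    rw [← sub_nonneg, ← hrest]
    exact sum_nonneg fun b _ => hD₀ b
  rw [hsplit]
  refine ((hM.single_kronecker b₀).traceNorm_add_le hR₀.isSelfAdjoint.neg).trans ?_
  rw [traceNorm_single_kronecker, traceNorm_neg, traceNorm_of_nonneg hR₀, hRtr]
  gcongr
  exact hρ.traceNorm_sub_sqrt_mul_mul_sqrt_le (hD₀ b₀) hD₀₁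

end Measurement

open Matrix in
theorem tender_measurement_with_record_general {d : ℕ} {A B : Type*} [Fintype B]
    [DecidableEq B]
    (ρ : A → Matrix (Fin d) (Fin d) ℂ) (hρ : ∀ a, IsDensity (ρ a))
    (D : B → Matrix (Fin d) (Fin d) ℂ) (hD : ∀ b, (D b).PosSemidef)
    (hD1 : ∑ b, D b = 1) (φ : A → B) (ε : ℝ)
    (h : ∀ a, 1 - (((ρ a) * D (φ a)).trace).re ≤ ε) :
    ∀ a, traceNorm (Matrix.single (φ a) (φ a) (1:ℂ) ⊗ₖ ρ a -
        ∑ b, Matrix.single b b (1:ℂ) ⊗ₖ ((hD b).sqrt * ρ a * (hD b).sqrt))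
      ≤ Real.sqrt (8 * ε) + ε := by
  intro a
  simp only [PosSemidef.sqrt_eq_cfcSqrt]
  refine ((hρ a).traceNorm_single_kronecker_sub_measureWithRecord_le (fun b => (hD b).nonneg)
    hD1 (φ a)).trans ?_
  have h8 : (2 : ℝ) ≤ √8 := Real.le_sqrt_of_sq_le (by norm_num)
  have hδ := Real.sqrt_le_sqrt (h a)
  rw [Real.sqrt_mul (by norm_num : (0 : ℝ) ≤ 8)]
  nlinarith [Real.sqrt_nonneg ε, h a]

theorem tender_measurement_with_record {d : ℕ} {A B : Type*} [Fintype A] [Fintype B]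
    [DecidableEq B]
    (ρ : A → Matrix (Fin d) (Fin d) ℂ) (hρ : ∀ a, IsDensity (ρ a))
    (D : B → Matrix (Fin d) (Fin d) ℂ) (hD : ∀ b, (D b).PosSemidef)
    (hD1 : ∑ b, D b = 1) (φ : A → B) (ε : ℝ) (hε : 0 < ε)
    (h : ∀ a, 1 - (((ρ a) * D (φ a)).trace).re ≤ ε) :
    ∀ a, traceNorm (Matrix.single (φ a) (φ a) (1:ℂ) ⊗ₖ ρ a -
        ∑ b, Matrix.single b b (1:ℂ) ⊗ₖ ((hD b).sqrt * ρ a * (hD b).sqrt))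
      ≤ Real.sqrt (8 * ε) + ε :=
  tender_measurement_with_record_general ρ hρ D hD hD1 φ ε h
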